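/- Let w be a nontrivial cyclically reduced element of the free group F(a,b,c), let M(w) be the maximum of |z| over all maximal subwords of the form a^z or b^z of the cyclic word of w (with M(w) = 0 if there are none), and let m > M(w). Then φ_m(w) ≠ 1 in F(a,b), where φ_m : F(a,b,c) → F(a,b) is the homomorphism sending a ↦ a, b ↦ b, c ↦ a^m b^m. -/

import Mathlib

/-!
Read the reduced word of `w` from the right. For each suffix `p :: L`, the reduced word of
`φ_m(p :: L)` begins with a syllable `x^e`, `e ≠ 0`, where `x` is the generator with which `φ_m(p)`
begins; moreover `m ∣ e` if `p = c^{±1}`, and `e ≡ ±r (mod m)` if `p` is a letter `a^{±1}` or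
`b^{±1}` starting a run of length `r`. Because `0 < r < m`, such an `e` is not divisible by `m`.
Hence the syllable survives when a letter is prepended: another letter of the run moves `e` by
`±1`, and the image of a `c^{±1}` in front only meets it with `x^{±m}`.
-/

/-- The homomorphism `F(a,b,c) → F(a,b)` sending `a ↦ a`, `b ↦ b`, `c ↦ a^m b^m`.
Here the generators of `F(a,b,c)` are `0, 1, 2 : Fin 3` and those of `F(a,b)` are
`0, 1 : Fin 2`. -/
def phiSubst (m : ℕ) : FreeGroup (Fin 3) →* FreeGroup (Fin 2) :=
  FreeGroup.lift ![FreeGroup.of 0, FreeGroup.of 1, FreeGroup.of 0 ^ m * FreeGroup.of 1 ^ m]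

open FreeGroup List

namespace FreeGroup

variable {α : Type*} [DecidableEq α]

lemma fst_eq_of_mem_toWord_of_zpow {x : α} {e : ℤ} {y : α × Bool}
    (hy : y ∈ (of x ^ e).toWord) : y.1 = x := by
  obtain ⟨n, rfl | rfl⟩ := Int.eq_nat_or_neg e <;> simp_all [invRev]

lemma toWord_of_zpow_mul {x : α} {e : ℤ} {h : FreeGroup α}
    (hh : ∀ y ∈ h.toWord.head?, y.1 ≠ x) :
    (of x ^ e * h).toWord = (of x ^ e).toWord ++ h.toWord := by
  rw [toWord_mul, IsReduced.reduce_eq]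
  refine isReduced_toWord.append isReduced_toWord fun y hy z hz hyz => ?_
  exact absurd (hyz ▸ fst_eq_of_mem_toWord_of_zpow (mem_of_mem_getLast? hy)) (hh z hz)

def LeadsWith (x : α) (e : ℤ) (g : FreeGroup α) : Prop :=
  ∃ h : FreeGroup α, g = of x ^ e * h ∧ ∀ y ∈ h.toWord.head?, y.1 ≠ x

lemma leadsWith_one (x : α) : LeadsWith x 0 1 := ⟨1, by simp, by simp⟩

namespace LeadsWith

variable {x y : α} {e : ℤ} {g : FreeGroup α}

lemma zpow_mul (hg : LeadsWith x e g) (k : ℤ) : LeadsWith x (k + e) (of x ^ k * g) := by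
  obtain ⟨h, rfl, hh⟩ := hg
  exact ⟨h, by rw [zpow_add, mul_assoc], hh⟩

lemma exists_mem_head?_toWord (hg : LeadsWith x e g) (he : e ≠ 0) :
    ∃ z ∈ g.toWord.head?, z.1 = x := by
  obtain ⟨h, rfl, hh⟩ := hg
  cases hw : (of x ^ e).toWord with
  | nil =>
    rw [toWord_eq_nil_iff, IsMulTorsionFree.zpow_eq_one_iff_right (of_ne_one x)] at hw
    exact absurd hw he
  | cons z zs =>
    exact ⟨z, by simp [toWord_of_zpow_mul hh, hw],
      fst_eq_of_mem_toWord_of_zpow (hw ▸ mem_cons_self)⟩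

lemma ne_one (hg : LeadsWith x e g) (he : e ≠ 0) : g ≠ 1 := by
  rintro rfl
  simpa using hg.exists_mem_head?_toWord he

lemma zero_of_ne (hg : LeadsWith y e g) (he : e ≠ 0) (hyx : y ≠ x) : LeadsWith x 0 g := by
  obtain ⟨z, hz, rfl⟩ := hg.exists_mem_head?_toWord he
  exact ⟨g, by simp, fun z' hz' => Option.mem_unique hz hz' ▸ hyx⟩

lemma zpow_mul_of_ne (hg : LeadsWith y e g) (he : e ≠ 0) (hyx : y ≠ x) (k : ℤ) :
    LeadsWith x k (of x ^ k * g) := by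
  simpa using (hg.zero_of_ne he hyx).zpow_mul k

end LeadsWith

end FreeGroup

namespace PhiSubst

def letterSign (d : Bool) : ℤ := if d then 1 else -1

lemma mk_singleton {α : Type*} (x : α) (d : Bool) :
    FreeGroup.mk [(x, d)] = of x ^ letterSign d := by
  cases d
  · rfl
  · exact (zpow_one _).symm

def imageHeadGen : Fin 3 × Bool → Fin 2
  | (0, _) => 0
  | (1, _) => 1
  | (2, d) => if d then 0 else 1

lemma fst_eq_of_imageHeadGen_eq {p q : Fin 3 × Bool} (hp : p.1 ≠ 2) (hq : q.1 ≠ 2)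
    (h : imageHeadGen p = imageHeadGen q) : p.1 = q.1 := by
  obtain ⟨x, d⟩ := p
  obtain ⟨y, d'⟩ := q
  fin_cases x <;> fin_cases y <;> simp_all [imageHeadGen]

lemma imageHeadGen_two_injective : Function.Injective fun d => imageHeadGen (2, d) := by
  decide

lemma phiSubst_mk_singleton_of_ne_two (m : ℕ) {q : Fin 3 × Bool} (hq : q.1 ≠ 2) :
    phiSubst m (FreeGroup.mk [q]) = of (imageHeadGen q) ^ letterSign q.2 := by
  obtain ⟨x, d⟩ := q
  fin_cases x <;> simp_all [mk_singleton, phiSubst, imageHeadGen]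

lemma phiSubst_mk_singleton_of_two (m : ℕ) {q : Fin 3 × Bool} (hq : q.1 = 2) :
    phiSubst m (FreeGroup.mk [q]) =
      of (imageHeadGen q) ^ (letterSign q.2 * m) *
        of (imageHeadGen (q.1, !q.2)) ^ (letterSign q.2 * m) := by
  obtain ⟨x, d⟩ := q
  subst hq
  cases d <;> simp [mk_singleton, phiSubst, imageHeadGen, letterSign]

lemma phiSubst_mk_cons (m : ℕ) (p : Fin 3 × Bool) (L : List (Fin 3 × Bool)) :
    phiSubst m (FreeGroup.mk (p :: L)) =
      phiSubst m (FreeGroup.mk [p]) * phiSubst m (FreeGroup.mk L) := by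
  rw [← _root_.map_mul, mul_mk, singleton_append]

variable {m : ℕ}

def ShortRuns (m : ℕ) (L : List (Fin 3 × Bool)) : Prop :=
  ∀ p : Fin 3 × Bool, p.1 ≠ 2 → ∀ r, replicate r p <:+: L → r < m

lemma ShortRuns.pos {L : List (Fin 3 × Bool)} (h : ShortRuns m L) : 0 < m :=
  h (0, true) (by decide) 0 (by simp)

lemma ShortRuns.of_cons {q : Fin 3 × Bool} {L : List (Fin 3 × Bool)}
    (h : ShortRuns m (q :: L)) : ShortRuns m L :=
  fun p hp r hr => h p hp r (hr.trans (suffix_cons q L).isInfix)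

lemma not_dvd_of_modEq_letterSign_mul {e : ℤ} {d : Bool} {r : ℕ} (hr : 0 < r) (hrm : r < m)
    (he : e ≡ letterSign d * r [ZMOD m]) : ¬ (m : ℤ) ∣ e := by
  intro hme
  have hmr : (m : ℤ) ∣ r := by
    have := Int.modEq_zero_iff_dvd.1 (he.symm.trans (Int.modEq_zero_iff_dvd.2 hme))
    cases d <;> simpa [letterSign] using this
  exact absurd (Int.le_of_dvd (by omega) hmr) (by omega)

def LeadingSyllableInv (m : ℕ) (p : Fin 3 × Bool) (L : List (Fin 3 × Bool))
    (g : FreeGroup (Fin 2)) : Prop :=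
  ∃ e : ℤ, e ≠ 0 ∧ LeadsWith (imageHeadGen p) e g ∧
    if p.1 = 2 then (m : ℤ) ∣ e
    else ∃ r, 0 < r ∧ replicate r p <+: p :: L ∧ e ≡ letterSign p.2 * r [ZMOD m]

lemma leadingSyllableInv_of_ne_two {q : Fin 3 × Bool} (hq : q.1 ≠ 2) {S : List (Fin 3 × Bool)}
    (hS : ShortRuns m (q :: S)) {g : FreeGroup (Fin 2)} {e : ℤ} {r : ℕ}
    (hg : LeadsWith (imageHeadGen q) e g) (hr : replicate r q <+: S)
    (he : e ≡ letterSign q.2 * r [ZMOD m]) :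
    LeadingSyllableInv m q S (phiSubst m (FreeGroup.mk [q]) * g) := by
  have hr' : replicate (r + 1) q <+: q :: S := cons_prefix_cons.2 ⟨rfl, hr⟩
  have he' : letterSign q.2 + e ≡ letterSign q.2 * (r + 1 : ℕ) [ZMOD m] := by
    simpa [mul_add, add_comm] using he.add_left (letterSign q.2)
  have hne := not_dvd_of_modEq_letterSign_mul r.succ_pos (hS q hq _ hr'.isInfix) he'
  rw [phiSubst_mk_singleton_of_ne_two m hq]
  exact ⟨_, fun h => hne (by rw [h]; exact dvd_zero _), hg.zpow_mul _,
    by rw [if_neg hq]; exact ⟨r + 1, r.succ_pos, hr', he'⟩⟩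

lemma leadingSyllableInv_of_two {q : Fin 3 × Bool} (hq : q.1 = 2) (hm : m ≠ 0)
    {S : List (Fin 3 × Bool)} {g : FreeGroup (Fin 2)} {e : ℤ}
    (hg : LeadsWith (imageHeadGen (q.1, !q.2)) e g) (he : letterSign q.2 * m + e ≠ 0) :
    LeadingSyllableInv m q S (phiSubst m (FreeGroup.mk [q]) * g) := by
  obtain ⟨x, d⟩ := q
  subst hq
  have hgen : imageHeadGen (2, !d) ≠ imageHeadGen (2, d) :=
    imageHeadGen_two_injective.ne (by cases d <;> decide)
  have hk : letterSign d * m ≠ 0 := by cases d <;> simp [letterSign, hm]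
  rw [phiSubst_mk_singleton_of_two m rfl, mul_assoc]
  exact ⟨_, hk, (hg.zpow_mul _).zpow_mul_of_ne he hgen _,
    by rw [if_pos rfl]; exact dvd_mul_left _ _⟩

namespace LeadingSyllableInv

variable {p q : Fin 3 × Bool} {L : List (Fin 3 × Bool)} {g : FreeGroup (Fin 2)}

lemma exists_leadsWith_of_ne_two (h : LeadingSyllableInv m p L g) (hq : q.1 ≠ 2)
    (hred : IsReduced (q :: p :: L)) :
    ∃ e r, LeadsWith (imageHeadGen q) e g ∧ replicate r q <+: p :: L ∧
      e ≡ letterSign q.2 * r [ZMOD m] := by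
  obtain ⟨e, he0, hg, hrun⟩ := h
  by_cases hgen : imageHeadGen p = imageHeadGen q
  · split_ifs at hrun with hp
    · exact ⟨e, 0, hgen ▸ hg, by simp, by simpa [Int.modEq_zero_iff_dvd] using hrun⟩
    · obtain ⟨r, -, hr, he⟩ := hrun
      have h1 : q.1 = p.1 := (fst_eq_of_imageHeadGen_eq hp hq hgen).symm
      have hpq : q = p := Prod.ext h1 ((isReduced_cons_cons.1 hred).1 h1)
      subst hpq
      exact ⟨e, r, hg, hr, he⟩
  · exact ⟨0, 0, hg.zero_of_ne he0 hgen, by simp, by simp⟩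

lemma exists_leadsWith_of_two (h : LeadingSyllableInv m p L g) (hq : q.1 = 2)
    (hred : IsReduced (q :: p :: L)) (hS : ShortRuns m (p :: L)) :
    ∃ e, LeadsWith (imageHeadGen (q.1, !q.2)) e g ∧ letterSign q.2 * m + e ≠ 0 := by
  obtain ⟨e, he0, hg, hrun⟩ := h
  by_cases hgen : imageHeadGen p = imageHeadGen (q.1, !q.2)
  · have hp : p.1 ≠ 2 := by
      obtain ⟨y, d'⟩ := p
      obtain ⟨x, d⟩ := q
      rintro rfl
      dsimp only at hq
      subst hq
      have hd : d' = !d := imageHeadGen_two_injective hgen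
      have := (isReduced_cons_cons.1 hred).1 rfl
      cases d <;> simp_all
    rw [if_neg hp] at hrun
    obtain ⟨r, hr0, hr, he⟩ := hrun
    have hne := not_dvd_of_modEq_letterSign_mul hr0 (hS p hp r hr.isInfix) he
    exact ⟨e, hgen ▸ hg, fun h => hne ⟨-letterSign q.2, by linarith⟩⟩
  · have hk : letterSign q.2 * m ≠ 0 := by cases q.2 <;> simp [letterSign, hS.pos.ne']
    exact ⟨0, hg.zero_of_ne he0 hgen, by simpa using hk⟩

end LeadingSyllableInv

lemma leadingSyllableInv_phiSubst_mk (p : Fin 3 × Bool) (L : List (Fin 3 × Bool))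
    (hred : IsReduced (p :: L)) (hS : ShortRuns m (p :: L)) :
    LeadingSyllableInv m p L (phiSubst m (FreeGroup.mk (p :: L))) := by
  induction L generalizing p with
  | nil =>
    rw [phiSubst_mk_cons, ← one_eq_mk, _root_.map_one]
    by_cases hq : p.1 = 2
    · exact leadingSyllableInv_of_two hq hS.pos.ne' (leadsWith_one _)
        (by cases p.2 <;> simp [letterSign, hS.pos.ne'])
    · exact leadingSyllableInv_of_ne_two (r := 0) hq hS (leadsWith_one _) (by simp) (by simp)
  | cons p' L ih =>
    have hinv := ih p' (isReduced_cons_cons.1 hred).2 hS.of_cons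
    rw [phiSubst_mk_cons]
    by_cases hq : p.1 = 2
    · obtain ⟨e, hg, he⟩ := hinv.exists_leadsWith_of_two hq hred hS.of_cons
      exact leadingSyllableInv_of_two hq hS.pos.ne' hg he
    · obtain ⟨e, r, hg, hr, he⟩ := hinv.exists_leadsWith_of_ne_two hq hred
      exact leadingSyllableInv_of_ne_two hq hS hg hr he

end PhiSubst

theorem phiSubst_ne_one (m : ℕ) (w : FreeGroup (Fin 3)) (hw : w ≠ 1)
    (hm : ∀ (x : Fin 3) (d : Bool) (r : ℕ), x ≠ 2 → r ≤ w.toWord.length →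
      List.replicate r (x, d) <:+: (w.toWord ++ w.toWord) → r < m) :
    phiSubst m w ≠ 1 := by
  obtain ⟨p, L, hL⟩ := exists_cons_of_ne_nil (mt toWord_eq_nil_iff.1 hw)
  have hS : PhiSubst.ShortRuns m (p :: L) := fun q hq r hr => by
    rw [← hL] at hr
    exact hm q.1 q.2 r hq (by simpa using hr.length_le) (hr.trans (prefix_append _ _).isInfix)
  obtain ⟨e, he, hg, -⟩ :=
    PhiSubst.leadingSyllableInv_phiSubst_mk p L (hL ▸ isReduced_toWord) hS
  rw [← mk_toWord (x := w), hL]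
  exact hg.ne_one he
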